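/- Let β > 0 and r : ℕ → ℝ, and set B^r_k := β²·r(2k−1) for k ≥ 1. For every rooted plane tree t with |t| = k+1 ≥ 2, let σ_t be the involution of {1,…,2k} induced by the right-to-left depth-first walk (pairing the two steps at which each edge is crossed). Then ∏_{i : i < σ_t(i)} β²·r(σ_t(i) − i) = ∏_{w ≠ root of t} B^r_{|t_w|}; in particular this product equals B^r(t)/B^r_{|t|} whenever B^r_{|t|} ≠ 0, where B^r is the bare Green function with weights (B^r_k). -/

import Mathlib

open scoped Classical

/-- Rooted plane trees: a tree is a root together with the ordered list of
the subtrees hanging from its children (left-to-right order). -/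
inductive PTree where
  | node : List PTree → PTree

namespace PTree

instance : Inhabited PTree := ⟨.node []⟩

/-- number of nodes -/
def size : PTree → ℕ
  | node l => 1 + (l.attach.map (fun c => size c.1)).sum
decreasing_by
  have := List.sizeOf_lt_of_mem c.2
  simp only [node.sizeOf_spec]; omega

/-- tree factorial: `t! = |t| * ∏ᵢ tᵢ!` -/
def tfact : PTree → ℕ
  | node l => size (node l) * (l.attach.map (fun c => tfact c.1)).prod
decreasing_by
  have := List.sizeOf_lt_of_mem c.2
  simp only [node.sizeOf_spec]; omega

/-- Shape equivalence: two plane trees have the same underlying rooted tree,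
i.e. there is a bijection between children matching shape-equivalent subtrees. -/
inductive ShapeEq : PTree → PTree → Prop
  | node {l₁ l₂ : List PTree} (e : Fin l₁.length ≃ Fin l₂.length)
      (h : ∀ i, ShapeEq (l₁.get i) (l₂.get (e i))) :
      ShapeEq (node l₁) (node l₂)

lemma size_pos (t : PTree) : 0 < t.size := by
  cases t; simp [size]

/-- The plane tree encoded by a parent function `p : Fin n → Fin n`:
`shapeAux n p fuel i` is the subtree rooted at node `i`, whose children are the
`j` with `p j = i` and `i < j` (ordered by label). `fuel = n` suffices. -/
def shapeAux (n : ℕ) (p : Fin n → Fin n) : ℕ → Fin n → PTree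
  | 0, _ => node []
  | fuel+1, i =>
      node (((List.finRange n).filter (fun j => decide (p j = i ∧ i < j))).map
        (shapeAux n p fuel))

/-- The plane tree encoded by a parent function (rooted at node `0`). -/
def shapeOf {n : ℕ} (p : Fin n → Fin n) : PTree :=
  if h : 0 < n then shapeAux n p n ⟨0, h⟩ else node []

/-- `alpha t` is the number of rooted labelled (increasing) trees of shape `t`:
labelled trees are encoded by their parent function, the root carrying the
label `0` and labels increasing away from the root. -/
noncomputable def alpha (t : PTree) : ℕ :=
  Nat.card {p : Fin t.size → Fin t.size //
    p ⟨0, t.size_pos⟩ = ⟨0, t.size_pos⟩ ∧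
    (∀ j : Fin t.size, 0 < (j : ℕ) → (p j : ℕ) < j) ∧
    ShapeEq (shapeOf p) t}

/-- `kappa t` is the number of rooted plane trees of shape `t`. -/
noncomputable def kappa (t : PTree) : ℕ := Nat.card {t' : PTree // ShapeEq t' t}

/-- symmetry factor: `σ(B₊(t₁^{n₁},…,t_m^{n_m})) = ∏ᵢ nᵢ! σ(tᵢ)^{nᵢ}`. -/
noncomputable def sym : PTree → ℕ
  | node l =>
      (∏ j : Fin l.length,
        (l.take ((j : ℕ) + 1)).countP (fun c => decide (ShapeEq c (l.get j)))) *
      (l.attach.map (fun c => sym c.1)).prod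
decreasing_by
  have := List.sizeOf_lt_of_mem c.2
  simp only [node.sizeOf_spec]; omega

/-- elementary differentials: `δ_• = 1`, `δ_t = k! ψ_k ∏ᵢ δ_{tᵢ}`. -/
def delta (ψ : ℕ → ℝ) : PTree → ℝ
  | node l =>
      (Nat.factorial l.length : ℝ) * ψ l.length *
      (l.attach.map (fun c => delta ψ c.1)).prod
decreasing_by
  have := List.sizeOf_lt_of_mem c.2
  simp only [node.sizeOf_spec]; omega

/-- bare Green function with weights `B`: `B(t) = B_{|t|} ∏ᵢ B(tᵢ)`. -/
def bare (B : ℕ → ℝ) : PTree → ℝ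
  | node l => B (size (node l)) * (l.attach.map (fun c => bare B c.1)).prod
decreasing_by
  have := List.sizeOf_lt_of_mem c.2
  simp only [node.sizeOf_spec]; omega

/-- `wt ψ t = ∏_{v ∈ t} ψ (d v)` where `d v` is the outdegree of `v`. -/
def wt (ψ : ℕ → ℝ) : PTree → ℝ
  | node l => ψ l.length * (l.attach.map (fun c => wt ψ c.1)).prod
decreasing_by
  have := List.sizeOf_lt_of_mem c.2
  simp only [node.sizeOf_spec]; omega

/-- `nodeProd B t = ∏_{w ≠ root} B_{|t_w|}`, product over non-root nodes of `t`. -/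
def nodeProd (B : ℕ → ℝ) : PTree → ℝ
  | node l => (l.attach.map (fun c => B (size c.1) * nodeProd B c.1)).prod
decreasing_by
  have := List.sizeOf_lt_of_mem c.2
  simp only [node.sizeOf_spec]; omega

/-- `R` is a set of representatives of the rooted trees with `n` nodes:
every plane tree of size `n` is shape-equivalent to exactly one member of `R`. -/
def IsTransversal (n : ℕ) (R : Finset PTree) : Prop :=
  (∀ t ∈ R, size t = n) ∧
  ∀ t : PTree, size t = n → ∃! u, u ∈ R ∧ ShapeEq t u

end PTree

namespace PTree

/-- the subtree of `t` rooted at the node reached by the path `p` of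
child indices (left-to-right, `0`-based) -/
def subtreeAt : List ℕ → PTree → Option PTree
  | [], t => some t
  | i :: p, node l => (l[i]?).bind (subtreeAt p)

/-- The right-to-left depth-first closed walk on a plane tree, as the list of
its directed edge crossings: `(q, true)` records the downward crossing of the
edge leading to the node with path `q`, and `(q, false)` its upward crossing.
Children are explored from the right to the left. -/
def walk : PTree → List (List ℕ × Bool)
  | node l =>
      (List.range l.length).reverse.flatMap (fun i =>
        match h : l[i]? with
        | some c =>
            ([i], true) :: ((walk c).map (fun pb => (i :: pb.1, pb.2))) ++
              [([i], false)]
        | none => [])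
decreasing_by
  have hm : c ∈ l := by
    have := List.getElem?_eq_some_iff.mp h
    rcases this with ⟨hlt, rfl⟩
    exact List.getElem_mem hlt
  have := List.sizeOf_lt_of_mem hm
  simp only [node.sizeOf_spec]; omega

/-- step (counted from `1`) at which the edge to the node with path `p` is
crossed downward during the right-to-left walk -/
def sDown (t : PTree) (p : List ℕ) : ℕ := (walk t).idxOf (p, true) + 1

/-- step (counted from `1`) at which the edge to the node with path `p` is
crossed upward during the right-to-left walk -/
def sUp (t : PTree) (p : List ℕ) : ℕ := (walk t).idxOf (p, false) + 1

end PTree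



/-!
The right-to-left walk crosses the edge above a node `w` downward at some step `s` and upward
at step `s + 2|t_w| - 1`: in between it performs exactly the `2(|t_w| - 1)` crossings of the
subtree `t_w`. So the steps `i` with `i < σ(i)` are the downward crossings, the one above `w`
contributes `β²·r(2|t_w| - 1) = B^r_{|t_w|}`, and the product runs over the non-root nodes.
Unfolding the recursion, `B^r(t) = B^r_{|t|} · ∏_{w ≠ root} B^r_{|t_w|}`.
-/

lemma List.map_finRange_getElem {α β : Type*} (l : List α) (f : α → β) :
    (List.finRange l.length).map (fun i : Fin l.length => f l[i.1]) = l.map f := by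
  rw [← List.ofFn_eq_map]
  exact List.ofFn_getElem_eq_map l f

lemma List.idxOf_append_cons_of_nodup {α : Type*} [BEq α] [LawfulBEq α] {A C : List α} {a : α}
    (h : (A ++ a :: C).Nodup) : (A ++ a :: C).idxOf a = A.length := by
  have ha : a ∉ A := fun ha => (List.nodup_append.1 h).2.2 a ha a List.mem_cons_self rfl
  rw [List.idxOf_append_of_notMem ha, List.idxOf_cons_self, Nat.add_zero]

lemma Finset.prod_Icc_one_eq_prod_fin {M : Type*} [CommMonoid M] (f : ℕ → M) (n : ℕ) :
    ∏ i ∈ Finset.Icc 1 n, f i = ∏ m : Fin n, f (m + 1) := by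
  rw [← Finset.Ico_add_one_right_eq_Icc, Finset.prod_Ico_eq_prod_range, Finset.prod_range,
    Nat.add_sub_cancel]
  simp only [add_comm]

namespace PTree

lemma size_node (l : List PTree) : size (node l) = 1 + (l.map size).sum := by
  rw [size, List.attach_map_val]

lemma nodeProd_node (B : ℕ → ℝ) (l : List PTree) :
    nodeProd B (node l) = (l.map fun c => B (size c) * nodeProd B c).prod := by
  rw [nodeProd, List.attach_map_val (f := fun c => B (size c) * nodeProd B c)]

theorem bare_eq_mul_nodeProd (B : ℕ → ℝ) : ∀ t : PTree, bare B t = B (size t) * nodeProd B t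
  | node l => by
    rw [bare, nodeProd]
    congr 1
    exact congrArg List.prod (List.map_congr_left fun c _ => bare_eq_mul_nodeProd B c.1)
decreasing_by
  have := List.sizeOf_lt_of_mem c.2
  simp only [node.sizeOf_spec]; omega

lemma subtreeAt_cons_node (i : ℕ) (q : List ℕ) (l : List PTree) (hi : i < l.length) :
    subtreeAt (i :: q) (node l) = subtreeAt q l[i] := by
  simp [subtreeAt, List.getElem?_eq_getElem hi]

def excursion (i : ℕ) (c : PTree) : List (List ℕ × Bool) :=
  ([i], true) :: ((walk c).map (fun x => (i :: x.1, x.2)) ++ [([i], false)])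

lemma walk_node (l : List PTree) :
    walk (node l) =
      (List.finRange l.length).reverse.flatMap fun i : Fin l.length => excursion i l[i.1] := by
  have hrange : (List.finRange l.length).map Fin.val = List.range l.length :=
    List.ext_getElem (by simp) (by simp)
  rw [walk, ← hrange, ← List.map_reverse, List.flatMap_map]
  congr 1
  funext i
  split
  · next c h =>
    rw [List.getElem?_eq_getElem i.2, Option.some_inj] at h
    subst h
    rfl
  · next h => simp at h

lemma mem_excursion {x : List ℕ × Bool} {i : ℕ} {c : PTree} :
    x ∈ excursion i c ↔
      x = ([i], true) ∨ x = ([i], false) ∨ ∃ y ∈ walk c, x = (i :: y.1, y.2) := by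
  simp only [excursion, List.mem_cons, List.mem_append, List.mem_map, List.not_mem_nil, or_false]
  grind

lemma head?_eq_of_mem_excursion {x : List ℕ × Bool} {i : ℕ} {c : PTree}
    (hx : x ∈ excursion i c) : x.1.head? = some i := by
  rcases mem_excursion.1 hx with rfl | rfl | ⟨y, -, rfl⟩ <;> rfl

theorem length_walk : ∀ t : PTree, (walk t).length = 2 * (size t - 1)
  | node l => by
    have length_excursion (i : Fin l.length) : (excursion i l[i.1]).length = 2 * size l[i.1] := by
      have := length_walk l[i.1]
      have := size_pos l[i.1]
      simp only [excursion, List.length_cons, List.length_append, List.length_map,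
        List.length_nil]
      omega
    simp only [walk_node, List.length_flatMap, List.map_reverse, List.sum_reverse,
      length_excursion, List.map_finRange_getElem l (fun c => 2 * size c),
      List.sum_map_mul_left, size_node, Nat.add_sub_cancel_left]
decreasing_by
  have := List.sizeOf_lt_of_mem (List.getElem_mem i.2)
  simp only [node.sizeOf_spec]; omega

theorem ne_nil_and_exists_subtreeAt_of_mem_walk :
    ∀ (t : PTree) {x : List ℕ × Bool}, x ∈ walk t → x.1 ≠ [] ∧ ∃ w, subtreeAt x.1 t = some w
  | node l, x, hx => by
    have ih (c) (hc : c ∈ l) {y : List ℕ × Bool} (hy : y ∈ walk c) :=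
      ne_nil_and_exists_subtreeAt_of_mem_walk c hy
    rw [walk_node, List.mem_flatMap] at hx
    obtain ⟨i, -, hx⟩ := hx
    rcases mem_excursion.1 hx with rfl | rfl | ⟨y, hy, rfl⟩
    · exact ⟨List.cons_ne_nil _ _, l[i], by simp [subtreeAt]⟩
    · exact ⟨List.cons_ne_nil _ _, l[i], by simp [subtreeAt]⟩
    · obtain ⟨-, w, hw⟩ := ih _ (List.getElem_mem i.2) hy
      exact ⟨List.cons_ne_nil _ _, w, by rw [subtreeAt_cons_node _ _ _ i.2, hw]⟩
decreasing_by
  have := List.sizeOf_lt_of_mem hc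
  simp only [node.sizeOf_spec]; omega

lemma nodup_excursion (i : ℕ) {c : PTree} (hc : (walk c).Nodup)
    (hne : ∀ y ∈ walk c, y.1 ≠ []) : (excursion i c).Nodup := by
  have hinj : Function.Injective fun x : List ℕ × Bool => (i :: x.1, x.2) :=
    fun x y h => by simpa [Prod.ext_iff] using h
  simp only [excursion, List.nodup_cons, List.nodup_append, List.mem_append, List.mem_map,
    List.mem_singleton, List.nodup_nil, List.not_mem_nil, hc.map hinj]
  grind

theorem nodup_walk : ∀ t : PTree, (walk t).Nodup
  | node l => by
    rw [walk_node, List.nodup_flatMap]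
    refine ⟨fun i _ => nodup_excursion i (nodup_walk l[i.1])
      fun _ hy => (ne_nil_and_exists_subtreeAt_of_mem_walk _ hy).1, ?_⟩
    refine (List.nodup_reverse.2 (List.nodup_finRange _)).imp fun {i j} hij => ?_
    refine List.disjoint_left.2 fun x hi hj => hij (Fin.ext ?_)
    simpa using (head?_eq_of_mem_excursion hi).symm.trans (head?_eq_of_mem_excursion hj)
decreasing_by
  have := List.sizeOf_lt_of_mem (List.getElem_mem i.2)
  simp only [node.sizeOf_spec]; omega

theorem exists_walk_eq_append : ∀ (t : PTree) {p : List ℕ} {w : PTree}, p ≠ [] →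
    subtreeAt p t = some w → ∃ A C, walk t =
      A ++ (p, true) :: ((walk w).map (fun x => (p ++ x.1, x.2)) ++ (p, false) :: C)
  | node l, i :: q, w, _, hw => by
    have hi : i < l.length := by
      by_contra h
      simp [subtreeAt, List.getElem?_eq_none (not_lt.1 h)] at hw
    rw [subtreeAt_cons_node _ _ _ hi] at hw
    have hexc : ∃ A C, excursion i l[i] = A ++ (i :: q, true) ::
        ((walk w).map (fun x => (i :: q ++ x.1, x.2)) ++ (i :: q, false) :: C) := by
      cases q with
      | nil =>
        cases hw
        exact ⟨[], [], by simp [excursion]⟩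
      | cons j q =>
        obtain ⟨A, C, h⟩ := exists_walk_eq_append l[i] (List.cons_ne_nil j q) hw
        refine ⟨([i], true) :: A.map (fun x => (i :: x.1, x.2)),
          C.map (fun x => (i :: x.1, x.2)) ++ [([i], false)], ?_⟩
        simp [excursion, h]
    obtain ⟨A, C, hAC⟩ := hexc
    obtain ⟨L₁, L₂, hL⟩ := List.append_of_mem
      (List.mem_reverse.2 (List.mem_finRange (⟨i, hi⟩ : Fin l.length)))
    refine ⟨L₁.flatMap (fun j : Fin l.length => excursion j l[j.1]) ++ A,
      C ++ L₂.flatMap (fun j : Fin l.length => excursion j l[j.1]), ?_⟩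
    rw [walk_node, hL, List.flatMap_append, List.flatMap_cons, hAC]
    simp
decreasing_by
  have := List.sizeOf_lt_of_mem (List.getElem_mem hi)
  simp only [node.sizeOf_spec]; omega

theorem sUp_eq_sDown_add {t : PTree} {p : List ℕ} {w : PTree} (hp : p ≠ [])
    (hw : subtreeAt p t = some w) : sUp t p = sDown t p + (2 * size w - 1) := by
  obtain ⟨A, C, h⟩ := exists_walk_eq_append t hp hw
  set M := (walk w).map fun x => (p ++ x.1, x.2)
  have h' : walk t = (A ++ (p, true) :: M) ++ (p, false) :: C := by simp [h]
  have hdown : (walk t).idxOf (p, true) = A.length :=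
    h ▸ List.idxOf_append_cons_of_nodup (h ▸ nodup_walk t)
  have hup : (walk t).idxOf (p, false) = A.length + 1 + M.length := by
    rw [h', List.idxOf_append_cons_of_nodup (h' ▸ nodup_walk t)]
    simp only [List.length_append, List.length_cons]
    omega
  have hM : M.length = 2 * (size w - 1) := by simp [M, length_walk]
  have := size_pos w
  simp only [sUp, sDown, hdown, hup, hM]
  omega

lemma prod_map_filter_excursion {M : Type*} [CommMonoid M] (f : List ℕ × Bool → M) (i : ℕ)
    (c : PTree) :
    (((excursion i c).filter (·.2)).map f).prod =
      f ([i], true) * (((walk c).filter (·.2)).map fun x => f (i :: x.1, x.2)).prod := by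
  simp [excursion, List.filter_map, Function.comp_def]

theorem prod_map_filter_walk (B : ℕ → ℝ) : ∀ t : PTree,
    (((walk t).filter (·.2)).map fun x => B (size ((subtreeAt x.1 t).getD default))).prod =
      nodeProd B t
  | node l => by
    have ih (c) (hc : c ∈ l) := prod_map_filter_walk B c
    have hexc (i : Fin l.length) :
        (((excursion i l[i.1]).filter (·.2)).map
          fun x => B (size ((subtreeAt x.1 (node l)).getD default))).prod =
        B (size l[i.1]) * nodeProd B l[i.1] := by
      rw [prod_map_filter_excursion]
      simp only [subtreeAt_cons_node _ _ _ i.2, ih _ (List.getElem_mem i.2)]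
      rfl
    rw [walk_node, List.filter_flatMap, List.map_flatMap, List.flatMap, List.prod_flatten]
    simp only [List.map_map, Function.comp_def, hexc, List.map_reverse, List.prod_reverse,
      List.map_finRange_getElem l fun c => B (size c) * nodeProd B c, nodeProd_node]
decreasing_by
  have := List.sizeOf_lt_of_mem hc
  simp only [node.sizeOf_spec]; omega

def SwapsCrossings (t : PTree) (σ : ℕ → ℕ) : Prop :=
  ∀ (p : List ℕ) (w : PTree), p ≠ [] → subtreeAt p t = some w →
    σ (sDown t p) = sUp t p ∧ σ (sUp t p) = sDown t p

section Crossing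

variable {M : Type*} [CommMonoid M] {t : PTree} {σ : ℕ → ℕ}

lemma crossing_factor_eq (hσ : SwapsCrossings t σ) (g : ℕ → M) (m : Fin (walk t).length) :
    (if m + 1 < σ (m + 1) then g (σ (m + 1) - (m + 1)) else 1) =
      if (walk t)[m.1].2 then g (2 * size ((subtreeAt (walk t)[m.1].1 t).getD default) - 1)
      else 1 := by
  have hidx : (walk t).idxOf (walk t)[m.1] = m := (nodup_walk t).idxOf_getElem m m.2
  obtain ⟨hp, w, hw⟩ := ne_nil_and_exists_subtreeAt_of_mem_walk t (List.getElem_mem m.2)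
  generalize (walk t)[m.1] = x at hidx hp hw
  obtain ⟨p, b⟩ := x
  dsimp only at hp hw ⊢
  have hup := sUp_eq_sDown_add hp hw
  have hw1 := size_pos w
  obtain ⟨hσdown, hσup⟩ := hσ p w hp hw
  cases b with
  | false =>
    have hm : sUp t p = m + 1 := by simp [sUp, hidx]
    rw [hm] at hσup hup
    rw [if_neg (by omega), if_neg Bool.false_ne_true]
  | true =>
    have hm : sDown t p = m + 1 := by simp [sDown, hidx]
    rw [hm] at hσdown hup
    rw [if_pos (by omega), if_pos rfl, hw, Option.getD_some]
    congr 1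
    omega

theorem prod_filter_lt_eq_prod_map_filter_walk (hσ : SwapsCrossings t σ) (g : ℕ → M) :
    ∏ i ∈ (Finset.Icc 1 (walk t).length).filter (fun i => i < σ i), g (σ i - i) =
      (((walk t).filter (·.2)).map
        fun x => g (2 * size ((subtreeAt x.1 t).getD default) - 1)).prod := by
  let F (x : List ℕ × Bool) : M :=
    if x.2 then g (2 * size ((subtreeAt x.1 t).getD default) - 1) else 1
  calc _ = ∏ m : Fin (walk t).length, F (walk t)[m.1] := by
        rw [Finset.prod_filter, Finset.prod_Icc_one_eq_prod_fin]
        exact Fintype.prod_congr _ _ (crossing_factor_eq hσ g)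
    _ = ((walk t).map F).prod := by rw [← List.prod_ofFn, List.ofFn_getElem_eq_map]
    _ = _ := by simp [F, List.prod_map_ite]

end Crossing

end PTree

open PTree in
theorem crossing_product_eq_bare_general (β : ℝ) (r : ℕ → ℝ)
    (Br : ℕ → ℝ) (hBr : ∀ k : ℕ, 1 ≤ k → Br k = β ^ 2 * r (2 * k - 1))
    (t : PTree) (k : ℕ) (hsize : size t = k + 1)
    (σ : ℕ → ℕ)
    (hσ : ∀ (p : List ℕ) (w : PTree), p ≠ [] → subtreeAt p t = some w →
      σ (sDown t p) = sUp t p ∧ σ (sUp t p) = sDown t p) :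
    (∏ i ∈ (Finset.Icc 1 (2 * k)).filter (fun i => i < σ i),
        (β ^ 2 * r (σ i - i))) =
      nodeProd Br t ∧
    (Br (size t) ≠ 0 →
      (∏ i ∈ (Finset.Icc 1 (2 * k)).filter (fun i => i < σ i),
          (β ^ 2 * r (σ i - i))) = bare Br t / Br (size t)) := by
  have hlen : (walk t).length = 2 * k := by rw [length_walk, hsize, Nat.add_sub_cancel]
  have hprod : ∏ i ∈ (Finset.Icc 1 (2 * k)).filter (fun i => i < σ i), β ^ 2 * r (σ i - i) =
      nodeProd Br t := by
    rw [← hlen, prod_filter_lt_eq_prod_map_filter_walk hσ (fun n => β ^ 2 * r n),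
      ← prod_map_filter_walk Br t]
    refine congrArg List.prod (List.map_congr_left fun x hx => ?_)
    obtain ⟨-, w, hw⟩ := ne_nil_and_exists_subtreeAt_of_mem_walk t (List.mem_filter.1 hx).1
    rw [hw, Option.getD_some, hBr _ (size_pos w)]
  exact ⟨hprod, fun hB => by rw [hprod, bare_eq_mul_nodeProd, mul_div_cancel_left₀ _ hB]⟩

open PTree in
/-- Let `B^r_k = β²·r(2k−1)` and let `t` be a plane tree with `|t| = k+1 ≥ 2`.
If `σ` is the involution of `{1,…,2k}` induced by the right-to-left walk on
`t` (for each edge it exchanges the steps of its two crossings), then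
`∏_{i < σ(i)} β²·r(σ(i)−i) = ∏_{w ≠ root} B^r_{|t_w|}`, and this product
equals `B^r(t)/B^r_{|t|}` whenever `B^r_{|t|} ≠ 0`, where `B^r` is the bare
Green function with weights `(B^r_k)`. -/
theorem crossing_product_eq_bare (β : ℝ) (hβ : 0 < β) (r : ℕ → ℝ)
    (Br : ℕ → ℝ) (hBr : ∀ k : ℕ, 1 ≤ k → Br k = β ^ 2 * r (2 * k - 1))
    (t : PTree) (k : ℕ) (hk : 1 ≤ k) (hsize : size t = k + 1)
    (σ : ℕ → ℕ)
    (hσ : ∀ (p : List ℕ) (w : PTree), p ≠ [] → subtreeAt p t = some w →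
      σ (sDown t p) = sUp t p ∧ σ (sUp t p) = sDown t p) :
    (∏ i ∈ (Finset.Icc 1 (2 * k)).filter (fun i => i < σ i),
        (β ^ 2 * r (σ i - i))) =
      nodeProd Br t ∧
    (Br (size t) ≠ 0 →
      (∏ i ∈ (Finset.Icc 1 (2 * k)).filter (fun i => i < σ i),
          (β ^ 2 * r (σ i - i))) = bare Br t / Br (size t)) :=
  crossing_product_eq_bare_general β r Br hBr t k hsize σ hσ
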